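/- Let 1 < c < 3, c ≠ 2, X₀ ≥ 2, N₀ = X₀^c, and I₀(t) = ∫_{X₀/2}^{X₀} e(t·y^c) dy. Then Ψ(X₀) = ∫_{−∞}^{∞} I₀(t)²·e(−N₀·t) dt satisfies Ψ(X₀) ≪ X₀^{2−c}. -/

import Mathlib

/-!
The factor `e(-N₀ t)` has modulus one, so it suffices to bound `∫ |I₀(t)|² dt`.
Trivially `|I₀(t)| ≤ X₀/2`. For `t ≠ 0` the phase `φ(y) = t y^c` has monotone derivative
with `|φ'| ≥ c |t| (X₀/2)^(c-1)` on `[X₀/2, X₀]`, so the first derivative test (integration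
by parts against `1/φ'`) gives `|t| |I₀(t)| ≪ X₀^(1-c)`. A function bounded by `A` and by
`B/|t|` has square at most `2B² / (T² + t²)` with `T = B/A`, whence
`∫ |I₀|² ≤ 2π A B ≪ X₀^(2-c)`.
-/

open Real Complex MeasureTheory

noncomputable def e (u : ℝ) : ℂ := Complex.exp (2 * Real.pi * Complex.I * u)

open Set ComplexConjugate

lemma norm_e (u : ℝ) : ‖e u‖ = 1 := by
  rw [e, norm_exp]
  simp

lemma e_neg (u : ℝ) : e (-u) = conj (e u) := by
  unfold e
  rw [← exp_conj]
  simp [map_ofNat]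

lemma continuous_e : Continuous e := by
  unfold e
  fun_prop

lemma HasDerivAt.e_comp {φ : ℝ → ℝ} {φ' y : ℝ} (h : HasDerivAt φ φ' y) :
    HasDerivAt (fun y => e (φ y)) (2 * π * I * φ' * e (φ y)) y := by
  have := (h.ofReal_comp.const_mul (2 * π * I : ℂ)).cexp
  unfold e
  convert this using 1
  ring

theorem norm_integral_e_le_of_inv_deriv_antitone {φ g g' : ℝ → ℝ} {a b : ℝ} (hab : a ≤ b)
    (hφ : ∀ y ∈ Icc a b, HasDerivAt φ (g y)⁻¹ y)
    (hg : ∀ y ∈ Icc a b, HasDerivAt g (g' y) y) (hg'_cont : ContinuousOn g' (Icc a b))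
    (hg_pos : ∀ y ∈ Icc a b, 0 < g y) (hg'_nonpos : ∀ y ∈ Icc a b, g' y ≤ 0) :
    ‖∫ y in a..b, e (φ y)‖ ≤ g a / π := by
  rw [← uIcc_of_le hab] at hφ hg hg'_cont hg_pos hg'_nonpos
  have hg'_int : IntervalIntegrable g' volume a b := hg'_cont.intervalIntegrable
  have hv'_cont :
      ContinuousOn (fun y => 2 * π * I * ((g y)⁻¹ : ℝ) * e (φ y)) (uIcc a b) := by
    have hg_cont : ContinuousOn g (uIcc a b) := fun y hy =>
      (hg y hy).continuousAt.continuousWithinAt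
    have hφ_cont : ContinuousOn φ (uIcc a b) := fun y hy =>
      (hφ y hy).continuousAt.continuousWithinAt
    exact (continuousOn_const.mul
      (continuous_ofReal.comp_continuousOn (hg_cont.inv₀ fun y hy => (hg_pos y hy).ne'))).mul
      (continuous_e.comp_continuousOn hφ_cont)
  have hibp := intervalIntegral.integral_mul_deriv_eq_deriv_mul
    (fun y hy => (hg y hy).ofReal_comp) (fun y hy => (hφ y hy).e_comp)
    (continuous_ofReal.comp_continuousOn hg'_cont).intervalIntegrable hv'_cont.intervalIntegrable
  have hibp_lhs : ∫ y in a..b, (g y : ℂ) * (2 * π * I * ((g y)⁻¹ : ℝ) * e (φ y))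
      = 2 * π * I * ∫ y in a..b, e (φ y) := by
    rw [← intervalIntegral.integral_const_mul]
    refine intervalIntegral.integral_congr fun y hy => ?_
    have : (g y : ℂ) ≠ 0 := by exact_mod_cast (hg_pos y hy).ne'
    push_cast
    field_simp
  have hint : ‖∫ y in a..b, (g' y : ℂ) * e (φ y)‖ ≤ g a - g b := by
    calc ‖∫ y in a..b, (g' y : ℂ) * e (φ y)‖
        ≤ ∫ y in a..b, ‖(g' y : ℂ) * e (φ y)‖ :=
          intervalIntegral.norm_integral_le_integral_norm hab
      _ = ∫ y in a..b, -g' y := intervalIntegral.integral_congr fun y hy => by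
          simp [norm_e, abs_of_nonpos (hg'_nonpos y hy)]
      _ = g a - g b := by
          rw [intervalIntegral.integral_neg,
            intervalIntegral.integral_eq_sub_of_hasDerivAt hg hg'_int]
          ring
  have hga := hg_pos a left_mem_uIcc
  have hgb := hg_pos b right_mem_uIcc
  have hbound : 2 * π * ‖∫ y in a..b, e (φ y)‖ ≤ 2 * g a := by
    calc 2 * π * ‖∫ y in a..b, e (φ y)‖ = ‖2 * π * I * ∫ y in a..b, e (φ y)‖ := by
          simp [abs_of_pos pi_pos]
      _ ≤ ‖(g b : ℂ) * e (φ b)‖ + ‖(g a : ℂ) * e (φ a)‖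
            + ‖∫ y in a..b, (g' y : ℂ) * e (φ y)‖ := by
          rw [← hibp_lhs, hibp]
          exact norm_sub_le_of_le (norm_sub_le _ _) le_rfl
      _ ≤ g b + g a + (g a - g b) := by
          simp only [norm_mul, norm_e, norm_real, norm_eq_abs, abs_of_pos hga, abs_of_pos hgb,
            mul_one]
          linarith
      _ = 2 * g a := by ring
  rw [le_div_iff₀ pi_pos]
  linarith

theorem abs_mul_norm_integral_e_mul_rpow_le {c a b : ℝ} (hc : 1 < c) (ha : 0 < a) (hab : a ≤ b)
    (t : ℝ) : |t| * ‖∫ y in a..b, e (t * y ^ c)‖ ≤ a ^ (1 - c) / (π * c) := by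
  have hc0 : 0 < c := by linarith
  wlog ht : 0 < t generalizing t
  · rcases (not_lt.1 ht).eq_or_lt with rfl | ht
    · simp only [abs_zero, zero_mul]
      positivity
    · have hconj : ∫ y in a..b, e (t * y ^ c) = conj (∫ y in a..b, e (-t * y ^ c)) := by
        rw [← intervalIntegral.intervalIntegral_conj]
        simp only [← e_neg, neg_mul, neg_neg]
      simpa [hconj, abs_neg] using this (-t) (neg_pos.2 ht)
  have hpos : ∀ y ∈ Icc a b, 0 < y := fun y hy => ha.trans_le hy.1
  -- `φ' = t c y^(c-1)` is increasing, so `g = 1 / φ'` is positive and decreasing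
  have hφ : ∀ y ∈ Icc a b, HasDerivAt (fun y => t * y ^ c) (y ^ (1 - c) / (c * t))⁻¹ y := by
    intro y hy
    have hinv : (y ^ (1 - c) / (c * t))⁻¹ = t * (c * y ^ (c - 1)) := by
      rw [show 1 - c = -(c - 1) by ring, rpow_neg (hpos y hy).le]
      field_simp
    rw [hinv]
    exact (hasDerivAt_rpow_const (Or.inl (hpos y hy).ne')).const_mul t
  have hg : ∀ y ∈ Icc a b,
      HasDerivAt (fun y => y ^ (1 - c) / (c * t)) ((1 - c) * y ^ (-c) / (c * t)) y := by
    intro y hy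
    refine ((hasDerivAt_rpow_const (Or.inl (hpos y hy).ne')).div_const (c * t)).congr_deriv ?_
    ring_nf
  have hg'_cont : ContinuousOn (fun y => (1 - c) * y ^ (-c) / (c * t)) (Icc a b) :=
    (continuousOn_const.mul
      (continuousOn_id.rpow_const fun y hy => Or.inl (hpos y hy).ne')).div_const _
  have key := norm_integral_e_le_of_inv_deriv_antitone hab hφ hg hg'_cont
    (fun y hy => by have := hpos y hy; positivity)
    (fun y hy => div_nonpos_of_nonpos_of_nonneg
      (mul_nonpos_of_nonpos_of_nonneg (by linarith) (by have := hpos y hy; positivity))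
      (by positivity))
  rw [abs_of_pos ht, ← le_div_iff₀' ht]
  refine key.trans (le_of_eq ?_)
  ring

lemma inv_sq_add_sq_eq {T : ℝ} (hT : T ≠ 0) (t : ℝ) :
    (T ^ 2 + t ^ 2)⁻¹ = (T ^ 2)⁻¹ * (1 + (t / T) ^ 2)⁻¹ := by
  field_simp

lemma integrable_inv_sq_add_sq {T : ℝ} (hT : T ≠ 0) :
    Integrable fun t : ℝ => (T ^ 2 + t ^ 2)⁻¹ := by
  simp_rw [inv_sq_add_sq_eq hT]
  exact (integrable_inv_one_add_sq.comp_div hT).const_mul _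

lemma integral_univ_inv_sq_add_sq {T : ℝ} (hT : 0 < T) :
    ∫ t : ℝ, (T ^ 2 + t ^ 2)⁻¹ = π / T := by
  simp_rw [inv_sq_add_sq_eq hT.ne']
  rw [integral_const_mul, Measure.integral_comp_div (fun t => (1 + t ^ 2)⁻¹),
    integral_univ_inv_one_add_sq, abs_of_pos hT, smul_eq_mul]
  field_simp

theorem integral_norm_sq_le {E : Type*} [NormedAddCommGroup E] {f : ℝ → E} {A B : ℝ}
    (hA : 0 < A) (hB : 0 < B) (hfA : ∀ t, ‖f t‖ ≤ A) (hfB : ∀ t, |t| * ‖f t‖ ≤ B) :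
    ∫ t, ‖f t‖ ^ 2 ≤ 2 * π * A * B := by
  obtain ⟨T, hT, hTA⟩ : ∃ T, 0 < T ∧ T * A = B :=
    ⟨B / A, div_pos hB hA, div_mul_cancel₀ B hA.ne'⟩
  -- add `(T ‖f t‖)² ≤ B²` and `(|t| ‖f t‖)² ≤ B²`
  have hmajor : ∀ t, ‖f t‖ ^ 2 ≤ 2 * B ^ 2 * (T ^ 2 + t ^ 2)⁻¹ := by
    intro t
    have hTf : T * ‖f t‖ ≤ B := by
      calc T * ‖f t‖ ≤ T * A := mul_le_mul_of_nonneg_left (hfA t) hT.le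
        _ = B := hTA
    have htf := hfB t
    rw [← div_eq_mul_inv, le_div_iff₀ (by positivity)]
    nlinarith [sq_abs t, mul_nonneg (abs_nonneg t) (norm_nonneg (f t)),
      mul_nonneg hT.le (norm_nonneg (f t))]
  calc ∫ t, ‖f t‖ ^ 2 ≤ ∫ t, 2 * B ^ 2 * (T ^ 2 + t ^ 2)⁻¹ :=
        integral_mono_of_nonneg (.of_forall fun t => by positivity)
          ((integrable_inv_sq_add_sq hT.ne').const_mul _) (.of_forall hmajor)
    _ = 2 * π * A * B := by
        rw [integral_const_mul, integral_univ_inv_sq_add_sq hT, ← hTA]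
        field_simp

theorem singular_integral_bound_general (c : ℝ) (hc1 : 1 < c) :
    ∃ C > 0, ∀ X₀ : ℝ, 2 ≤ X₀ →
      ‖∫ t : ℝ, (∫ y in (X₀ / 2)..X₀, e (t * y ^ c)) ^ 2 * e (-(X₀ ^ c) * t)‖ ≤
        C * X₀ ^ (2 - c) := by
  refine ⟨2 / (c * 2 ^ (2 - c)), by positivity, fun X hX => ?_⟩
  have hX0 : 0 < X := by linarith
  have hX2 : 0 < X / 2 := by linarith
  set I : ℝ → ℂ := fun t => ∫ y in (X / 2)..X, e (t * y ^ c)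
  have hI_le : ∀ t, ‖I t‖ ≤ X / 2 := fun t => by
    simpa [norm_e, abs_of_pos hX2, show X - X / 2 = X / 2 by ring] using
      intervalIntegral.norm_integral_le_of_norm_le_const (a := X / 2) (b := X) (C := 1)
        (f := fun y => e (t * y ^ c)) fun y _ => (norm_e _).le
  have hI_decay : ∀ t, |t| * ‖I t‖ ≤ (X / 2) ^ (1 - c) / (π * c) :=
    abs_mul_norm_integral_e_mul_rpow_le hc1 hX2 (by linarith)
  calc ‖∫ t, I t ^ 2 * e (-(X ^ c) * t)‖ ≤ ∫ t, ‖I t‖ ^ 2 := by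
        refine (norm_integral_le_integral_norm _).trans (le_of_eq ?_)
        simp only [norm_mul, norm_pow, norm_e, mul_one]
    _ ≤ 2 * π * (X / 2) * ((X / 2) ^ (1 - c) / (π * c)) :=
        integral_norm_sq_le hX2 (by have := pi_pos; positivity) hI_le hI_decay
    _ = 2 / c * (X / 2) ^ (2 - c) := by
        rw [show 2 - c = 1 - c + 1 by ring, rpow_add_one hX2.ne']
        field_simp
    _ = 2 / (c * 2 ^ (2 - c)) * X ^ (2 - c) := by
        rw [div_rpow hX0.le zero_le_two]
        ring

/-- With `N₀ = X₀^c` and `I₀(t) = ∫_{X₀/2}^{X₀} e(t y^c) dy`, the singular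
integral `Ψ(X₀) = ∫_{-∞}^{∞} I₀(t)² e(-N₀ t) dt` satisfies `Ψ(X₀) ≪ X₀^{2-c}`. -/
theorem singular_integral_bound (c : ℝ) (hc1 : 1 < c) (hc3 : c < 3) (hc2 : c ≠ 2) :
    ∃ C > 0, ∀ X₀ : ℝ, 2 ≤ X₀ →
      ‖∫ t : ℝ, (∫ y in (X₀ / 2)..X₀, e (t * y ^ c)) ^ 2 * e (-(X₀ ^ c) * t)‖ ≤
        C * X₀ ^ (2 - c) :=
  singular_integral_bound_general c hc1
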